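/- Let S ⊂ R^n be measurable with 0 < |S| < ∞, f ∈ L^1(S) real-valued, and k ∈ R. Let f^k = min(f, k) be the truncation of f from above at level k. Then ⨍_S |f^k - (f^k)_S| ≤ ⨍_S |f - f_S|. -/

import Mathlib

/-!
Write `c = ⨍ f` and `c' = ⨍ min f k`. Since `f - c` has mean zero, `⨍ |f - c| = 2 ⨍ (c - f)⁺`, and
likewise for the truncation. Truncation lowers the mean, `c' ≤ c`, and `c' ≤ k`; together these give
the pointwise bound `(c' - min f k)⁺ ≤ (c - f)⁺`, which integrates to the claim.
-/

open MeasureTheory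

lemma max_sub_min_zero_le_max_sub_zero {a c c' k : ℝ} (hc : c' ≤ c) (hk : c' ≤ k) :
    max (c' - min a k) 0 ≤ max (c - a) 0 := by
  rcases le_total a k with hak | hka
  · rw [min_eq_left hak]
    exact max_le_max (by linarith) le_rfl
  · rw [min_eq_right hka, max_eq_right (by linarith)]
    exact le_max_right _ _

namespace MeasureTheory

variable {α : Type*} [MeasurableSpace α] {μ : Measure α} {g : α → ℝ}

lemma average_mono {f : α → ℝ} (hf : Integrable f μ) (hg : Integrable g μ) (h : f ≤ g) :
    ⨍ x, f x ∂μ ≤ ⨍ x, g x ∂μ := by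
  simp only [average_eq, smul_eq_mul]
  exact mul_le_mul_of_nonneg_left (integral_mono hf hg h) (inv_nonneg.2 measureReal_nonneg)

variable [IsFiniteMeasure μ]

lemma integral_abs_sub_average_eq (hg : Integrable g μ) :
    ∫ x, |g x - ⨍ y, g y ∂μ| ∂μ = 2 * ∫ x, max (⨍ y, g y ∂μ - g x) 0 ∂μ := by
  set c := ⨍ y, g y ∂μ
  have hpos : Integrable (fun x => max (c - g x) 0) μ :=
    ((integrable_const c).sub hg).sup (integrable_zero _ _ μ)
  have hpt : ∀ x, |g x - c| = 2 * max (c - g x) 0 + (g x - c) := by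
    intro x
    rcases le_total (g x) c with h | h
    · rw [abs_of_nonpos (by linarith), max_eq_left (by linarith)]; ring
    · rw [abs_of_nonneg (by linarith), max_eq_right (by linarith)]; ring
  have hsub : Integrable (fun x => g x - c) μ := hg.sub (integrable_const c)
  simp only [hpt]
  rw [integral_add (hpos.const_mul 2) hsub, integral_const_mul, integral_sub_average, add_zero]

lemma average_min_const_le_average (hg : Integrable g μ) (k : ℝ) :
    ⨍ x, min (g x) k ∂μ ≤ ⨍ x, g x ∂μ :=
  average_mono (hg.inf (integrable_const k)) hg fun _ => min_le_left _ _

lemma average_min_const_le_const [NeZero μ] (hg : Integrable g μ) (k : ℝ) :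
    ⨍ x, min (g x) k ∂μ ≤ k :=
  calc ⨍ x, min (g x) k ∂μ ≤ ⨍ _, k ∂μ :=
        average_mono (hg.inf (integrable_const k)) (integrable_const k) fun _ => min_le_right _ _
    _ = k := average_const μ k

theorem average_abs_sub_average_min_const_le (hg : Integrable g μ) (k : ℝ) :
    ⨍ x, |min (g x) k - ⨍ y, min (g y) k ∂μ| ∂μ ≤ ⨍ x, |g x - ⨍ y, g y ∂μ| ∂μ := by
  rcases eq_zero_or_neZero μ with rfl | _
  · simp
  have hgk : Integrable (fun x => min (g x) k) μ := hg.inf (integrable_const k)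
  have hpt : ∀ x, max (⨍ y, min (g y) k ∂μ - min (g x) k) 0 ≤ max (⨍ y, g y ∂μ - g x) 0 :=
    fun x => max_sub_min_zero_le_max_sub_zero (average_min_const_le_average hg k)
      (average_min_const_le_const hg k)
  have hint : ∫ x, |min (g x) k - ⨍ y, min (g y) k ∂μ| ∂μ ≤ ∫ x, |g x - ⨍ y, g y ∂μ| ∂μ := by
    rw [integral_abs_sub_average_eq hgk, integral_abs_sub_average_eq hg]
    gcongr 2 * ?_
    exact integral_mono (((integrable_const _).sub hgk).sup (integrable_zero _ _ μ))
      (((integrable_const _).sub hg).sup (integrable_zero _ _ μ)) hpt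
  rw [average_eq μ (fun x => |min (g x) k - ⨍ y, min (g y) k ∂μ|),
    average_eq μ (fun x => |g x - ⨍ y, g y ∂μ|)]
  gcongr

end MeasureTheory

theorem stmt_13_general (n : ℕ)
    (S : Set (EuclideanSpace ℝ (Fin n)))
    (hfin : volume S < ⊤)
    (f : EuclideanSpace ℝ (Fin n) → ℝ) (hf : IntegrableOn f S)
    (k : ℝ) :
    (⨍ x in S, |min (f x) k - ⨍ y in S, min (f y) k|)
      ≤ ⨍ x in S, |f x - ⨍ y in S, f y| := by
  have : Fact (volume S < ⊤) := ⟨hfin⟩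
  exact average_abs_sub_average_min_const_le hf k

/-- For the upper truncation `f^k = min(f, k)`,
`⨍_S |f^k - (f^k)_S| ≤ ⨍_S |f - f_S|`. -/
theorem stmt_13 (n : ℕ)
    (S : Set (EuclideanSpace ℝ (Fin n))) (hS : MeasurableSet S)
    (h0 : 0 < volume S) (hfin : volume S < ⊤)
    (f : EuclideanSpace ℝ (Fin n) → ℝ) (hf : IntegrableOn f S)
    (k : ℝ) :
    (⨍ x in S, |min (f x) k - ⨍ y in S, min (f y) k|)
      ≤ ⨍ x in S, |f x - ⨍ y in S, f y| :=
  stmt_13_general n S hfin f hf k
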